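/- Let c ∈ ℝ, D = c² + 4, a = (c + √D)/2, b = (c − √D)/2, and consider the four vectors e₁ = (1,1,−b,−b), e₂ = (−1,1,b,−b), e₃ = (−1,−1,a,a), e₄ = (1,−1,−a,a) in ℝ⁴. Then these vectors are pairwise orthogonal for the Petean bilinear form B_c, with B_c(e₁,e₁) = B_c(e₂,e₂) = 2√D > 0 and B_c(e₃,e₃) = B_c(e₄,e₄) = −2√D < 0. In particular (e₁,e₂,e₃,e₄) is a basis of ℝ⁴ and B_c is a nondegenerate symmetric bilinear form of signature (2,2) for every value of c. -/

import Mathlib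

open Real

/-- The Petean bilinear form `B_c(u,v) = u₁v₃ + u₃v₁ + u₂v₄ + u₄v₂ + c(u₁v₁ + u₂v₂)`. -/
def Bpet (c : ℝ) (u v : Fin 4 → ℝ) : ℝ :=
  u 0 * v 2 + u 2 * v 0 + u 1 * v 3 + u 3 * v 1 + c * (u 0 * v 0 + u 1 * v 1)

/-!
Whenever `a + b = c`, the frame `(1,1,-b,-b), (-1,1,b,-b), (-1,-1,a,a), (1,-1,-a,a)` diagonalises
`B_c` with diagonal `2(a-b), 2(a-b), -2(a-b), -2(a-b)`, and for the two roots of `x² - c x - 1`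
one has `a - b = √(c² + 4) > 0`. A `B_c`-orthogonal family with nonzero squares is linearly
independent. Nondegeneracy is read off by pairing with the standard basis:
`B_c(u, ε₃) = u₁`, `B_c(u, ε₄) = u₂`, `B_c(u, ε₁) = u₃ + c u₁`, `B_c(u, ε₂) = u₄ + c u₂`.
-/

theorem Bpet_comm (c : ℝ) (u v : Fin 4 → ℝ) : Bpet c u v = Bpet c v u := by
  unfold Bpet; ring

theorem eq_zero_of_forall_Bpet_eq_zero {c : ℝ} {u : Fin 4 → ℝ} (hu : ∀ v, Bpet c u v = 0) :
    u = 0 := by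
  have h0 := hu (Pi.single 2 1)
  have h1 := hu (Pi.single 3 1)
  have h2 := hu (Pi.single 0 1)
  have h3 := hu (Pi.single 1 1)
  simp only [Bpet, Pi.single_apply] at h0 h1 h2 h3
  norm_num at h0 h1 h2 h3
  funext i
  fin_cases i <;> simp_all

def peteanForm (c : ℝ) : LinearMap.BilinForm ℝ (Fin 4 → ℝ) :=
  LinearMap.mk₂ ℝ (Bpet c)
    (fun _ _ _ ↦ by simp only [Bpet, Pi.add_apply]; ring)
    (fun _ _ _ ↦ by simp only [Bpet, Pi.smul_apply, smul_eq_mul]; ring)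
    (fun _ _ _ ↦ by simp only [Bpet, Pi.add_apply]; ring)
    (fun _ _ _ ↦ by simp only [Bpet, Pi.smul_apply, smul_eq_mul]; ring)

theorem peteanForm_apply (c : ℝ) (u v : Fin 4 → ℝ) : peteanForm c u v = Bpet c u v := rfl

def peteanFrame (a b : ℝ) : Fin 4 → Fin 4 → ℝ :=
  ![![1, 1, -b, -b], ![-1, 1, b, -b], ![-1, -1, a, a], ![1, -1, -a, a]]

section Frame

variable {a b c : ℝ} (hsum : a + b = c)
include hsum

theorem Bpet_peteanFrame_of_ne {i j : Fin 4} (hij : i ≠ j) :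
    Bpet c (peteanFrame a b i) (peteanFrame a b j) = 0 := by
  subst hsum
  fin_cases i <;> fin_cases j <;> first | exact absurd rfl hij | simp [Bpet, peteanFrame] <;> ring

theorem Bpet_peteanFrame_self (i : Fin 4) :
    Bpet c (peteanFrame a b i) (peteanFrame a b i) =
      ![2 * (a - b), 2 * (a - b), -(2 * (a - b)), -(2 * (a - b))] i := by
  subst hsum
  fin_cases i <;> simp [Bpet, peteanFrame] <;> ring

theorem linearIndependent_peteanFrame (hab : a ≠ b) : LinearIndependent ℝ (peteanFrame a b) := by
  refine LinearMap.linearIndependent_of_isOrthoᵢ (B := peteanForm c)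
    (fun i j hij ↦ Bpet_peteanFrame_of_ne hsum hij) fun i ↦ ?_
  have hab' : 2 * (a - b) ≠ 0 := by
    simpa [sub_eq_zero] using hab
  rw [peteanForm_apply, Bpet_peteanFrame_self hsum]
  fin_cases i <;> simpa using hab'

end Frame

/-- With `D = c² + 4`, `a = (c+√D)/2`, `b = (c−√D)/2`, the vectors
`e₁ = (1,1,−b,−b)`, `e₂ = (−1,1,b,−b)`, `e₃ = (−1,−1,a,a)`, `e₄ = (1,−1,−a,a)`
are pairwise `B_c`-orthogonal, with `B_c(e₁,e₁) = B_c(e₂,e₂) = 2√D > 0` and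
`B_c(e₃,e₃) = B_c(e₄,e₄) = −2√D < 0`.  In particular they form a basis of ℝ⁴ and
`B_c` is a nondegenerate symmetric bilinear form of signature (2,2). -/
theorem statement3 (c : ℝ) :
    let D : ℝ := c ^ 2 + 4
    let a : ℝ := (c + Real.sqrt D) / 2
    let b : ℝ := (c - Real.sqrt D) / 2
    let e : Fin 4 → Fin 4 → ℝ :=
      ![![1, 1, -b, -b], ![-1, 1, b, -b], ![-1, -1, a, a], ![1, -1, -a, a]]
    (∀ i j : Fin 4, i ≠ j → Bpet c (e i) (e j) = 0) ∧
    Bpet c (e 0) (e 0) = 2 * Real.sqrt D ∧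
    Bpet c (e 1) (e 1) = 2 * Real.sqrt D ∧
    Bpet c (e 2) (e 2) = -(2 * Real.sqrt D) ∧
    Bpet c (e 3) (e 3) = -(2 * Real.sqrt D) ∧
    0 < 2 * Real.sqrt D ∧
    LinearIndependent ℝ e ∧
    (∀ u v : Fin 4 → ℝ, Bpet c u v = Bpet c v u) ∧
    (∀ u : Fin 4 → ℝ, (∀ v : Fin 4 → ℝ, Bpet c u v = 0) → u = 0) := by
  intro D a b e
  have hsum : a + b = c := by ring
  have hdiff : a - b = √D := by ring
  have hpos : 0 < 2 * √D := by positivity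
  have hself := Bpet_peteanFrame_self hsum
  simp only [hdiff] at hself
  refine ⟨fun i j ↦ Bpet_peteanFrame_of_ne hsum, hself 0, hself 1, hself 2, hself 3, hpos,
    linearIndependent_peteanFrame hsum (by rw [← sub_ne_zero, hdiff]; positivity), Bpet_comm c,
    fun u ↦ eq_zero_of_forall_Bpet_eq_zero⟩
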